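/- arXiv:1101.2865 — 3 statements merged into one kernel-verified Lean document; each statement's English description precedes it below -/
import Mathlib

section
/- Let N ⊆ M be von Neumann algebras and E : M → N a conditional expectation (unital positive N-bimodule projection) satisfying the Pimsner–Popa inequality E(x) ≥ λ x for all positive x ∈ M with a constant λ > 0. Then Z := E_n(1), where E = E_n + E_s is the decomposition into normal and singular parts, satisfies λ·1 ≤ Z ≤ 1; in particular Z is invertible with ‖Z^{-1}‖ ≤ λ^{-1}. -/
/-!
The upper bound is `E_n(1) = 1 - E_s(1)`. For the lower bound, singularity of `E_s` and Zorn's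
lemma give a maximal orthogonal family of projections `q ∈ M` with `E_s(q) = 0`. Their ranges
span a dense subspace: otherwise the projection onto the orthogonal complement, which lies in `M`
because its range is invariant under `M'`, would dominate a further such projection. For the sum
`e` of a finite subfamily, Pimsner–Popa gives `λ e ≤ E(e) = E_n(e) ≤ E_n(1)`, so
`re ⟪E_n(1) x, x⟫ ≥ λ ‖x‖²` on the dense span, hence everywhere. Invertibility of `Z` and
`‖Z⁻¹‖ ≤ λ⁻¹` then follow from antitonicity of the inverse on strictly positive elements.
-/

variable {H : Type*} [NormedAddCommGroup H] [InnerProductSpace ℂ H] [CompleteSpace H]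

/-- A map `Φ` is *normal* on a von Neumann algebra `M` if it preserves suprema of
bounded increasing nets of positive elements of `M`. -/
def IsNormalOn (M : Set (H →L[ℂ] H)) (Φ : (H →L[ℂ] H) →ₗ[ℂ] (H →L[ℂ] H)) : Prop :=
  ∀ (ι : Type) [Preorder ι] [IsDirected ι (· ≤ ·)] [Nonempty ι] (f : ι → (H →L[ℂ] H)),
    (∀ i, f i ∈ M) → (∀ i, 0 ≤ f i) → Monotone f →
      ∀ x ∈ M, IsLUB (Set.range f) x → IsLUB ((fun y => Φ y) '' Set.range f) (Φ x)

/-- A positive map `Φ` is *singular* on `M` if every nonzero orthogonal projection in `M`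
dominates a nonzero subprojection in `M` annihilated by `Φ`. -/
def IsSingularOn (M : Set (H →L[ℂ] H)) (Φ : (H →L[ℂ] H) →ₗ[ℂ] (H →L[ℂ] H)) : Prop :=
  ∀ p ∈ M, IsSelfAdjoint p → IsIdempotentElem p → p ≠ 0 →
    ∃ q ∈ M, IsSelfAdjoint q ∧ IsIdempotentElem q ∧ q ≠ 0 ∧ q ≤ p ∧ Φ q = 0

/-- `E` is a conditional expectation from the von Neumann algebra `M` onto the
subalgebra `N`: a unital positive `N`-bimodule projection. -/
structure IsCondExpOn (M N : VonNeumannAlgebra H)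
    (E : (H →L[ℂ] H) →ₗ[ℂ] (H →L[ℂ] H)) : Prop where
  range_mem : ∀ x ∈ M, E x ∈ N
  unital : E 1 = 1
  pos : ∀ x ∈ M, 0 ≤ x → 0 ≤ E x
  fix : ∀ x ∈ N, E x = x
  bimod : ∀ a ∈ N, ∀ b ∈ N, ∀ x ∈ M, E (a * x * b) = a * E x * b

theorem CStarAlgebra.exists_units_norm_inv_le {A : Type*} [CStarAlgebra A] [PartialOrder A]
    [StarOrderedRing A] {z : A} {l : ℝ} (hl : 0 < l) (h : l • (1 : A) ≤ z) :
    ∃ u : Aˣ, (u : A) = z ∧ ‖(↑u⁻¹ : A)‖ ≤ l⁻¹ := by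
  rw [← Algebra.algebraMap_eq_smul_one] at h
  have hl' := isStrictlyPositive_algebraMap (A := A) hl
  obtain ⟨u, rfl⟩ := CStarAlgebra.isUnit_of_le _ h hl'
  refine ⟨u, rfl, ?_⟩
  let c : Aˣ := Units.map (algebraMap ℝ A : ℝ →* A) (Units.mk0 l hl.ne')
  have hinv : (↑u⁻¹ : A) ≤ c⁻¹ := CStarAlgebra.inv_le_inv hl'.nonneg h
  have hu : (0 : A) ≤ ↑u⁻¹ := CFC.inv_nonneg_of_nonneg u (hl'.nonneg.trans h)
  rw [norm_le_iff_le_algebraMap _ (inv_nonneg.2 hl.le) hu]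
  simpa [c] using hinv

open ContinuousLinearMap Module.End Submodule
open scoped InnerProductSpace

theorem IsStarProjection.sum {R ι : Type*} [NonUnitalSemiring R] [StarRing R] {p : ι → R}
    {s : Finset ι} (hp : ∀ i ∈ s, IsStarProjection (p i))
    (ho : (s : Set ι).Pairwise fun i j => p i * p j = 0) :
    IsStarProjection (∑ i ∈ s, p i) := by
  classical
  induction s using Finset.induction_on with
  | empty => simp
  | insert a s ha ih =>
    rw [Finset.sum_insert ha]
    rw [Finset.coe_insert, Set.pairwise_insert] at ho
    refine (hp a (by simp)).add (ih (fun i hi => hp i (by simp [hi])) ho.1) ?_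
    rw [Finset.mul_sum]
    exact Finset.sum_eq_zero fun i hi => (ho.2 i hi (by rintro rfl; exact ha hi)).1

theorem ContinuousLinearMap.sum_apply_eq_self_of_mem_iSup_range {R M ι : Type*} [Semiring R]
    [TopologicalSpace M] [AddCommMonoid M] [Module R M] [ContinuousAdd M] {p : ι → M →L[R] M}
    {s : Finset ι} (hp : ∀ i ∈ s, IsIdempotentElem (p i))
    (ho : (s : Set ι).Pairwise fun i j => p i * p j = 0) {x : M}
    (hx : x ∈ ⨆ i ∈ s, LinearMap.range (p i : M →ₗ[R] M)) : (∑ i ∈ s, p i) x = x := by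
  classical
  suffices h : ⨆ i ∈ s, LinearMap.range (p i : M →ₗ[R] M) ≤
      LinearMap.eqLocus ((∑ i ∈ s, p i : M →L[R] M) : M →ₗ[R] M) LinearMap.id from h hx
  refine iSup₂_le fun i hi => ?_
  rintro _ ⟨y, rfl⟩
  change (∑ j ∈ s, p j) (p i y) = p i y
  rw [sum_apply, Finset.sum_eq_single i (fun j hj hji => ?_) (fun h => absurd hi h)]
  · exact congr($((hp i hi).eq) y)
  · exact congr($(ho hj hi hji) y)

theorem ContinuousLinearMap.nonneg_of_re_inner_nonneg_of_dense {𝕜 E : Type*} [RCLike 𝕜]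
    [NormedAddCommGroup E] [InnerProductSpace 𝕜 E] [CompleteSpace E] {T : E →L[𝕜] E}
    (hT : IsSelfAdjoint T) {K : Submodule 𝕜 E} (hK : Dense (K : Set E))
    (h : ∀ x ∈ K, 0 ≤ RCLike.re ⟪T x, x⟫_𝕜) : 0 ≤ T := by
  rw [nonneg_iff_isPositive, isPositive_def']
  exact ⟨hT, hK.induction h (isClosed_le continuous_const T.reApplyInnerSelf_continuous)⟩

theorem exists_maximal_pairwise_subset {α : Type*} (P : Set α) (r : α → α → Prop) :
    ∃ S, Maximal (fun S => S ⊆ P ∧ S.Pairwise r) S := by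
  refine zorn_subset _ fun c hc hchain =>
    ⟨⋃₀ c, ⟨?_, ?_⟩, fun s hs => Set.subset_sUnion_of_mem hs⟩
  · exact Set.sUnion_subset fun s hs => (hc hs).1
  · exact (Set.pairwise_sUnion hchain.directedOn).2 fun s hs => (hc hs).2

namespace VonNeumannAlgebra

theorem units_inv_mem (N : VonNeumannAlgebra H) {u : (H →L[ℂ] H)ˣ}
    (hu : (u : H →L[ℂ] H) ∈ N) : (↑u⁻¹ : H →L[ℂ] H) ∈ N := by
  rw [← N.commutant_commutant, mem_commutant_iff]
  exact fun y hy => (Commute.units_inv_left (mem_commutant_iff.mp hy _ hu)).symm.eq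

theorem iSup_range_mem_invtSubmodule (M : VonNeumannAlgebra H) {S : Set (H →L[ℂ] H)}
    (hS : S ⊆ M) {z : H →L[ℂ] H} (hz : z ∈ M.commutant) :
    (⨆ q : S, LinearMap.range (q : H →ₗ[ℂ] H)) ∈ invtSubmodule (z : H →ₗ[ℂ] H) := by
  rw [mem_invtSubmodule_iff_map_le, Submodule.map_iSup]
  refine iSup_mono fun q => ?_
  rintro _ ⟨_, ⟨y, rfl⟩, rfl⟩
  refine ⟨z y, ?_⟩
  simpa using congr($(mem_commutant_iff.mp hz q (hS q.2)) y)

theorem starProjection_orthogonal_iSup_range_mem (M : VonNeumannAlgebra H)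
    {S : Set (H →L[ℂ] H)} (hS : S ⊆ M) :
    (⨆ q : S, LinearMap.range (q : H →ₗ[ℂ] H))ᗮ.starProjection ∈ M := by
  rw [IsStarProjection.mem_iff isStarProjection_starProjection, range_starProjection]
  intro y hy
  apply orthogonal_mem_invtSubmodule
  exact M.iSup_range_mem_invtSubmodule hS (star_mem hy)

end VonNeumannAlgebra

theorem IsSingularOn.exists_pairwise_dense_iSup_range {M : VonNeumannAlgebra H}
    {Φ : (H →L[ℂ] H) →ₗ[ℂ] (H →L[ℂ] H)} (hΦ : IsSingularOn (M : Set (H →L[ℂ] H)) Φ) :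
    ∃ S : Set (H →L[ℂ] H), (∀ q ∈ S, q ∈ M ∧ IsStarProjection q ∧ Φ q = 0) ∧
      S.Pairwise (fun p q => p * q = 0) ∧
      Dense ((⨆ q : S, LinearMap.range (q : H →ₗ[ℂ] H) : Submodule ℂ H) : Set H) := by
  obtain ⟨S, hS⟩ := exists_maximal_pairwise_subset
    {q | q ∈ M ∧ IsStarProjection q ∧ Φ q = 0} (fun p q : H →L[ℂ] H => p * q = 0)
  refine ⟨S, hS.prop.1, hS.prop.2, ?_⟩
  set K := ⨆ q : S, LinearMap.range (q : H →ₗ[ℂ] H)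
  rw [dense_iff_topologicalClosure_eq_top, topologicalClosure_eq_top_iff]
  by_contra hK
  set r := Kᗮ.starProjection with hr_def
  have hr : IsStarProjection r := isStarProjection_starProjection
  have hr0 : r ≠ 0 := fun h => hK <| by
    rw [← range_starProjection Kᗮ, ← hr_def, h]
    exact LinearMap.range_zero
  have hrM : r ∈ M := M.starProjection_orthogonal_iSup_range_mem fun q hq => (hS.prop.1 hq).1
  obtain ⟨q', hq'M, hq'sa, hq'id, hq'0, hq'r, hΦq'⟩ :=
    hΦ r hrM hr.isSelfAdjoint hr.isIdempotentElem hr0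
  have hq' : IsStarProjection q' := ⟨hq'id, hq'sa⟩
  have hrq : ∀ q ∈ S, r * q = 0 := fun q hq => by
    ext x
    refine (starProjection_apply_eq_zero_iff _).2 (le_orthogonal_orthogonal K ?_)
    exact le_iSup (fun q : S => LinearMap.range (q : H →ₗ[ℂ] H)) ⟨q, hq⟩ ⟨x, rfl⟩
  have hq'q : ∀ q ∈ S, q' * q = 0 := fun q hq => by
    rw [← (hq'.le_iff_mul_eq_left hr).1 hq'r, mul_assoc, hrq q hq, mul_zero]
  have hq'S : q' ∈ S := by
    refine hS.mem_of_prop_insert ⟨Set.insert_subset ⟨hq'M, hq', hΦq'⟩ hS.prop.1,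
      Set.pairwise_insert.2 ⟨hS.prop.2, fun q hq _ => ⟨hq'q q hq, ?_⟩⟩⟩
    simpa [(hS.prop.1 hq).2.1.isSelfAdjoint.star_eq, hq'sa.star_eq] using
      congr(star $(hq'q q hq))
  exact hq'0 (by rw [← hq'id.eq, hq'q q' hq'S])

theorem smul_one_le_of_isSingularOn {M : VonNeumannAlgebra H}
    {Φ Ψ : (H →L[ℂ] H) →ₗ[ℂ] (H →L[ℂ] H)} {l : ℝ} (hΦ : ∀ x ∈ M, 0 ≤ x → 0 ≤ Φ x)
    (hΨ : IsSingularOn (M : Set (H →L[ℂ] H)) Ψ)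
    (h : ∀ q ∈ M, IsStarProjection q → Ψ q = 0 → l • q ≤ Φ q) :
    l • (1 : H →L[ℂ] H) ≤ Φ 1 := by
  obtain ⟨S, hS, hSo, hdense⟩ := hΨ.exists_pairwise_dense_iSup_range
  have hΦ1 : 0 ≤ Φ 1 := hΦ 1 (one_mem M) zero_le_one
  rw [← sub_nonneg]
  have hsa : IsSelfAdjoint (Φ 1 - l • 1) :=
    hΦ1.isSelfAdjoint.sub (IsSelfAdjoint.smul (star_trivial l) (.one _))
  refine nonneg_of_re_inner_nonneg_of_dense hsa hdense fun x hx => ?_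
  obtain ⟨F, hxF⟩ := mem_iSup_iff_exists_finset.1 hx
  set e := ∑ q ∈ F, (q : H →L[ℂ] H)
  have hSo' : (F : Set S).Pairwise fun p q => (p : H →L[ℂ] H) * q = 0 :=
    fun p _ q _ hpq => hSo p.2 q.2 (Subtype.coe_injective.ne hpq)
  have he : IsStarProjection e := .sum (fun q _ => (hS q q.2).2.1) hSo'
  have heM : e ∈ M := sum_mem fun q _ => (hS q q.2).1
  have hex : e x = x := sum_apply_eq_self_of_mem_iSup_range (p := fun q : S => (q : H →L[ℂ] H))
    (fun q _ => (hS q q.2).2.1.isIdempotentElem) hSo' hxF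
  have hle : l • e ≤ Φ 1 := calc
    l • e ≤ Φ e := h e heM he (by simp [e, map_sum, fun q : S => (hS q q.2).2.2])
    _ ≤ Φ 1 := sub_nonneg.1 <| by
      simpa using hΦ (1 - e) (sub_mem (one_mem M) heM) he.one_sub_nonneg
  have hxe : (Φ 1 - l • 1) x = (Φ 1 - l • e) x := by simp [hex]
  rw [hxe]
  simpa using ((le_def _ _).1 hle).re_inner_nonneg_left x

theorem stmt_5_general (M N : VonNeumannAlgebra H)
    (E En Es : (H →L[ℂ] H) →ₗ[ℂ] (H →L[ℂ] H))
    (hE : IsCondExpOn M N E)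
    (l : ℝ) (hl : 0 < l)
    (hPP : ∀ x ∈ M, 0 ≤ x → l • x ≤ E x)
    -- `E = E_n + E_s` is the decomposition of `E` into normal and singular positive parts
    (hEn_range : ∀ x ∈ M, En x ∈ N)
    (hEn_pos : ∀ x ∈ M, 0 ≤ x → 0 ≤ En x) (hEs_pos : ∀ x ∈ M, 0 ≤ x → 0 ≤ Es x)
    (hEs_sing : IsSingularOn (M : Set (H →L[ℂ] H)) Es)
    (hsum : ∀ x ∈ M, E x = En x + Es x) :
    l • (1 : H →L[ℂ] H) ≤ En 1 ∧ En 1 ≤ 1 ∧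
      ∃ W : H →L[ℂ] H, W ∈ N ∧ W * En 1 = 1 ∧ En 1 * W = 1 ∧ ‖W‖ ≤ l⁻¹ := by
  have h1 : (1 : H →L[ℂ] H) ∈ M := one_mem M
  have hupper : En 1 ≤ 1 := by
    have h := hsum 1 h1
    rw [hE.unital] at h
    exact (le_add_of_nonneg_right (hEs_pos 1 h1 zero_le_one)).trans_eq h.symm
  have hlower : l • (1 : H →L[ℂ] H) ≤ En 1 :=
    smul_one_le_of_isSingularOn hEn_pos hEs_sing fun q hqM hq hEsq => by
      simpa [hsum q hqM, hEsq] using hPP q hqM hq.nonneg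
  obtain ⟨u, hu, hnorm⟩ := CStarAlgebra.exists_units_norm_inv_le hl hlower
  exact ⟨hlower, hupper, ↑u⁻¹, N.units_inv_mem (hu ▸ hEn_range 1 h1), hu ▸ u.inv_mul,
    hu ▸ u.mul_inv, hnorm⟩

/-- If a conditional expectation `E : M → N` satisfies the Pimsner–Popa inequality
`E x ≥ λ • x` for positive `x ∈ M` with `λ > 0`, then `Z := E_n(1)` (where `E = E_n + E_s`
is the normal/singular decomposition) satisfies `λ • 1 ≤ Z ≤ 1`; in particular `Z` is
invertible with `‖Z⁻¹‖ ≤ λ⁻¹`. -/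
theorem stmt_5 (M N : VonNeumannAlgebra H) (hNM : (N : Set (H →L[ℂ] H)) ⊆ M)
    (E En Es : (H →L[ℂ] H) →ₗ[ℂ] (H →L[ℂ] H))
    (hE : IsCondExpOn M N E)
    (l : ℝ) (hl : 0 < l)
    (hPP : ∀ x ∈ M, 0 ≤ x → l • x ≤ E x)
    -- `E = E_n + E_s` is the decomposition of `E` into normal and singular positive parts
    (hEn_range : ∀ x ∈ M, En x ∈ N) (hEs_range : ∀ x ∈ M, Es x ∈ N)
    (hEn_pos : ∀ x ∈ M, 0 ≤ x → 0 ≤ En x) (hEs_pos : ∀ x ∈ M, 0 ≤ x → 0 ≤ Es x)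
    (hEn_normal : IsNormalOn (M : Set (H →L[ℂ] H)) En)
    (hEs_sing : IsSingularOn (M : Set (H →L[ℂ] H)) Es)
    (hsum : ∀ x ∈ M, E x = En x + Es x) :
    l • (1 : H →L[ℂ] H) ≤ En 1 ∧ En 1 ≤ 1 ∧
      ∃ W : H →L[ℂ] H, W ∈ N ∧ W * En 1 = 1 ∧ En 1 * W = 1 ∧ ‖W‖ ≤ l⁻¹ :=
  stmt_5_general M N E En Es hE l hl hPP hEn_range hEn_pos hEs_pos hEs_sing hsum
end

section
/- Let N ⊆ M be von Neumann algebras admitting a normal conditional expectation Ẽ : M → N satisfying Ẽ(x) ≥ λ x for all positive x ∈ M with λ > 0. Then every conditional expectation F : M → N is automatically normal. -/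
variable {H : Type*} [NormedAddCommGroup H] [InnerProductSpace ℂ H] [CompleteSpace H]

/-!
For positive `y ∈ M` the Pimsner–Popa inequality gives `Ẽ y - λ y ≥ 0`, and applying the positive
map `F`, which fixes `Ẽ y ∈ N`, yields `λ F y ≤ Ẽ y`. A positive map dominated in this way by a
normal one is normal: if `b` bounds the `F xᵢ` from above, then `Ẽ x - λ (F x - b)` bounds the
`Ẽ xᵢ`, so normality of `Ẽ` forces `F x ≤ b`.
-/

theorem ContinuousLinearMap.le_of_smul_le_smul_left {l : ℝ} (hl : 0 < l) {a b : H →L[ℂ] H}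
    (h : l • a ≤ l • b) : a ≤ b := by
  simpa [inv_smul_smul₀ hl.ne'] using smul_le_smul_of_nonneg_left h (inv_nonneg.2 hl.le)

theorem VonNeumannAlgebra.real_smul_mem (M : VonNeumannAlgebra H) (l : ℝ) {x : H →L[ℂ] H}
    (hx : x ∈ M) : l • x ∈ M := by
  rw [← Complex.coe_smul]
  exact M.smul_mem hx _

theorem IsNormalOn.of_smul_le {M : VonNeumannAlgebra H} {E G : (H →L[ℂ] H) →ₗ[ℂ] (H →L[ℂ] H)}
    (hE : IsNormalOn (M : Set (H →L[ℂ] H)) E) (hG : ∀ y ∈ M, 0 ≤ y → 0 ≤ G y)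
    {l : ℝ} (hl : 0 < l) (hGE : ∀ y ∈ M, 0 ≤ y → l • G y ≤ E y) :
    IsNormalOn (M : Set (H →L[ℂ] H)) G := by
  intro ι _ _ _ f hfM hfpos hfmono x hxM hlub
  have hfx (i : ι) : 0 ≤ x - f i := sub_nonneg.2 (hlub.1 ⟨i, rfl⟩)
  have hxf (i : ι) : x - f i ∈ M := sub_mem hxM (hfM i)
  refine ⟨?_, fun b hb => ?_⟩
  · rintro _ ⟨_, ⟨i, rfl⟩, rfl⟩
    simpa [sub_nonneg] using hG _ (hxf i) (hfx i)
  · have hEb : E x - l • (G x - b) ∈ upperBounds ((fun y => E y) '' Set.range f) := by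
      rintro _ ⟨_, ⟨i, rfl⟩, rfl⟩
      have hGb : G (f i) ≤ b := hb ⟨f i, ⟨i, rfl⟩, rfl⟩
      have : l • (G x - b) ≤ E x - E (f i) := calc
        l • (G x - b) ≤ l • G (x - f i) := by
          rw [map_sub]; exact smul_le_smul_of_nonneg_left (sub_le_sub_left hGb _) hl.le
        _ ≤ E (x - f i) := hGE _ (hxf i) (hfx i)
        _ = E x - E (f i) := map_sub ..
      exact le_sub_comm.1 this
    have : l • (G x - b) ≤ l • 0 := by
      simpa using (hE ι f hfM hfpos hfmono x hxM hlub).2 hEb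
    exact sub_nonpos.1 (ContinuousLinearMap.le_of_smul_le_smul_left hl this)

theorem IsCondExpOn.smul_le_of_pimsner_popa {M N : VonNeumannAlgebra H}
    (hNM : (N : Set (H →L[ℂ] H)) ⊆ M) {E F : (H →L[ℂ] H) →ₗ[ℂ] (H →L[ℂ] H)}
    (hE : IsCondExpOn M N E) (hF : IsCondExpOn M N F) {l : ℝ}
    (hPP : ∀ x ∈ M, 0 ≤ x → l • x ≤ E x) {y : H →L[ℂ] H} (hyM : y ∈ M) (hy : 0 ≤ y) :
    l • F y ≤ E y := by
  have hEy : E y ∈ N := hE.range_mem y hyM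
  have := hF.pos _ (sub_mem (hNM hEy) (M.real_smul_mem l hyM)) (sub_nonneg.2 (hPP y hyM hy))
  rwa [map_sub, hF.fix _ hEy, LinearMap.map_smul_of_tower, sub_nonneg] at this

/-- If `N ⊆ M` admits a normal conditional expectation `Ẽ : M → N` satisfying the
Pimsner–Popa inequality `Ẽ x ≥ λ • x` for positive `x ∈ M` with `λ > 0`, then every
conditional expectation `F : M → N` is automatically normal. -/
theorem stmt_8 (M N : VonNeumannAlgebra H) (hNM : (N : Set (H →L[ℂ] H)) ⊆ M)
    (Et : (H →L[ℂ] H) →ₗ[ℂ] (H →L[ℂ] H))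
    (hEt : IsCondExpOn M N Et)
    (hEt_normal : IsNormalOn (M : Set (H →L[ℂ] H)) Et)
    (l : ℝ) (hl : 0 < l)
    (hPP : ∀ x ∈ M, 0 ≤ x → l • x ≤ Et x)
    (F : (H →L[ℂ] H) →ₗ[ℂ] (H →L[ℂ] H))
    (hF : IsCondExpOn M N F) :
    IsNormalOn (M : Set (H →L[ℂ] H)) F := by
  exact hEt_normal.of_smul_le hF.pos hl
      (fun y hyM hy => hEt.smul_le_of_pimsner_popa hNM hF hPP hyM hy)
end

section
/- Let I_n = (a_n, b_n) ⊂ (0,∞) be an increasing sequence of intervals with a_n → 0 and b_n → ∞, and fix s ∈ ℝ. Define δ^{I_n}_s(t) = (e^s b_n (t − a_n) + a_n (b_n − t)) / (e^s (t − a_n) + b_n − t). Then δ^{I_n}_s converges to the dilation δ_s(t) = e^s t uniformly on every compact subset of (0,∞), and the same holds for all derivatives. -/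
/-!
`δ^{(a,b)}_s` is the Möbius map of a `2 × 2` matrix which, scaled by `b⁻¹`, tends to
`diag(e^s, 1)`, the matrix of `δ_s`, as `a → 0` and `b → ∞`. Every derivative of a Möbius map
`t ↦ (αt + β)/(γt + δ)` is an explicit rational function, jointly continuous in the matrix and
in `t` away from the pole `γt + δ = 0`, and the limit `diag(e^s, 1)` has no pole at all. Joint
continuity along the compact set `{diag(e^s, 1)} × K` then gives uniform convergence on `K`.
-/

open Filter Topology
open scoped Nat

theorem IsCompact.tendstoUniformlyOn_of_continuousAt {ι α β γ : Type*} [TopologicalSpace α]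
    [TopologicalSpace β] [UniformSpace γ] {F : α → β → γ} {K : Set β} {q : α}
    (hK : IsCompact K) (hF : ∀ x ∈ K, ContinuousAt ↿F (q, x))
    {v : ι → α} {l : Filter ι} (hv : Tendsto v l (𝓝 q)) :
    TendstoUniformlyOn (fun n => F (v n)) (F q) l K := by
  intro u hu
  obtain ⟨u', hu', hsymm, hcomp⟩ := comp_symm_of_uniformity hu
  refine hv.eventually <| hK.eventually_forall_of_forall_eventually
    (P := fun p x => (F q x, F p x) ∈ u) fun x hx => ?_
  have hslice : Tendsto (fun z : α × β => (q, z.2)) (𝓝 (q, x)) (𝓝 (q, x)) :=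
    (continuous_const.prodMk continuous_snd).continuousAt
  filter_upwards [hF x hx (mem_nhds_left _ hu'),
    (hF x hx).tendsto.comp hslice (mem_nhds_left _ hu')] with z hz hzq
  exact hcomp ⟨_, hsymm hzq, hz⟩

noncomputable def moebius (A : Matrix (Fin 2) (Fin 2) ℝ) (t : ℝ) : ℝ :=
  (A 0 0 * t + A 0 1) / (A 1 0 * t + A 1 1)

theorem hasDerivAt_moebius (A : Matrix (Fin 2) (Fin 2) ℝ) {t : ℝ}
    (ht : A 1 0 * t + A 1 1 ≠ 0) :
    HasDerivAt (moebius A) (A.det / (A 1 0 * t + A 1 1) ^ 2) t := by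
  have h := (((hasDerivAt_id' t).const_mul (A 0 0)).add_const (A 0 1)).fun_div
    (((hasDerivAt_id' t).const_mul (A 1 0)).add_const (A 1 1)) ht
  refine h.congr_deriv ?_
  rw [Matrix.det_fin_two]
  ring

theorem iteratedDeriv_succ_moebius (A : Matrix (Fin 2) (Fin 2) ℝ) (k : ℕ) {t : ℝ}
    (ht : A 1 0 * t + A 1 1 ≠ 0) :
    iteratedDeriv (k + 1) (moebius A) t =
      (-1) ^ k * (k + 1)! * A 1 0 ^ k * A.det / (A 1 0 * t + A 1 1) ^ (k + 2) := by
  induction k generalizing t with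
  | zero => simpa using (hasDerivAt_moebius A ht).deriv
  | succ k ih =>
    have hU : IsOpen {t : ℝ | A 1 0 * t + A 1 1 ≠ 0} :=
      isOpen_ne_fun (by fun_prop) (by fun_prop)
    have heq : iteratedDeriv (k + 1) (moebius A) =ᶠ[𝓝 t]
        fun t => (-1) ^ k * (k + 1)! * A 1 0 ^ k * A.det / (A 1 0 * t + A 1 1) ^ (k + 2) :=
      eventually_of_mem (hU.mem_nhds ht) fun t ht => ih ht
    have hderiv := (hasDerivAt_const t ((-1) ^ k * (k + 1)! * A 1 0 ^ k * A.det)).fun_div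
      ((((hasDerivAt_id' t).const_mul (A 1 0)).add_const (A 1 1)).fun_pow (k + 2))
      (pow_ne_zero _ ht)
    rw [iteratedDeriv_succ, heq.deriv_eq, hderiv.deriv]
    push_cast [Nat.factorial_succ]
    field_simp
    ring

theorem continuousAt_iteratedDeriv_moebius (k : ℕ) {A : Matrix (Fin 2) (Fin 2) ℝ} {t : ℝ}
    (ht : A 1 0 * t + A 1 1 ≠ 0) :
    ContinuousAt ↿(fun A => iteratedDeriv k (moebius A)) (A, t) := by
  cases k with
  | zero => exact ContinuousAt.div (by fun_prop) (by fun_prop) ht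
  | succ k =>
    have hW : IsOpen {z : Matrix (Fin 2) (Fin 2) ℝ × ℝ | z.1 1 0 * z.2 + z.1 1 1 ≠ 0} :=
      isOpen_ne_fun (by fun_prop) (by fun_prop)
    refine ContinuousAt.congr (f := fun z : Matrix (Fin 2) (Fin 2) ℝ × ℝ =>
        (-1) ^ k * (k + 1)! * z.1 1 0 ^ k * z.1.det / (z.1 1 0 * z.2 + z.1 1 1) ^ (k + 2))
      (ContinuousAt.div (by fun_prop) (by fun_prop) (pow_ne_zero _ ht)) ?_
    exact eventually_of_mem (hW.mem_nhds ht) fun z hz =>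
      (iteratedDeriv_succ_moebius z.1 k hz).symm

/-- The matrix of `δ^{(a,b)}_s` for `E = exp s`, i.e. of `χ⁻¹ ∘ δ_s ∘ χ` with
`χ t = (t - a)/(b - t)`, scaled by `b⁻¹`. -/
noncomputable def intervalDilationMatrix (E a b : ℝ) : Matrix (Fin 2) (Fin 2) ℝ :=
  !![E - a * b⁻¹, a * (1 - E); (E - 1) * b⁻¹, 1 - E * a * b⁻¹]

theorem moebius_intervalDilationMatrix (E : ℝ) {a b : ℝ} (hb : b ≠ 0) :
    moebius (intervalDilationMatrix E a b) =
      fun t => (E * b * (t - a) + a * (b - t)) / (E * (t - a) + b - t) := by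
  funext t
  have hnum : (E - a * b⁻¹) * t + a * (1 - E) = (E * b * (t - a) + a * (b - t)) / b := by
    field_simp; ring
  have hden : (E - 1) * b⁻¹ * t + (1 - E * a * b⁻¹) = (E * (t - a) + b - t) / b := by
    field_simp; ring
  simp only [moebius, intervalDilationMatrix, Matrix.of_apply, Matrix.cons_val',
    Matrix.cons_val_zero, Matrix.cons_val_one, Matrix.empty_val', Matrix.cons_val_fin_one]
  rw [hnum, hden, div_div_div_cancel_right₀ hb]

theorem tendsto_intervalDilationMatrix (E : ℝ) {ι : Type*} {l : Filter ι} {a b : ι → ℝ}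
    (ha : Tendsto a l (𝓝 0)) (hb : Tendsto b l atTop) :
    Tendsto (fun n => intervalDilationMatrix E (a n) (b n)) l (𝓝 !![E, 0; 0, 1]) := by
  have hcont : Continuous fun p : ℝ × ℝ => intervalDilationMatrix E p.1 p.2⁻¹ := by
    refine continuous_matrix fun i j => ?_
    fin_cases i <;> fin_cases j <;> simp [intervalDilationMatrix] <;> fun_prop
  have hlim : intervalDilationMatrix E 0 0 = !![E, 0; 0, 1] := by
    simp [intervalDilationMatrix]
  simpa [hlim, Function.comp_def] using
    (hcont.tendsto (0, 0)).comp (ha.prodMk_nhds hb.inv_tendsto_atTop)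

theorem stmt_15_general (s : ℝ) (a b : ℕ → ℝ)
    (ha_lim : Tendsto a atTop (nhds 0)) (hb_lim : Tendsto b atTop atTop) :
    ∀ K : Set ℝ, K ⊆ Set.Ioi (0 : ℝ) → IsCompact K → ∀ k : ℕ,
      TendstoUniformlyOn
        (fun n => iteratedDeriv k (fun t : ℝ =>
          (Real.exp s * b n * (t - a n) + a n * (b n - t)) /
            (Real.exp s * (t - a n) + b n - t)))
        (iteratedDeriv k (fun t : ℝ => Real.exp s * t)) atTop K := by
  intro K _ hK k
  have hdiag : moebius !![Real.exp s, 0; 0, 1] = fun t => Real.exp s * t := by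
    funext t
    simp [moebius]
  have h := hK.tendstoUniformlyOn_of_continuousAt
    (fun t _ => continuousAt_iteratedDeriv_moebius k (by simp))
    (tendsto_intervalDilationMatrix (Real.exp s) ha_lim hb_lim)
  rw [hdiag] at h
  refine h.congr ?_
  filter_upwards [hb_lim.eventually_ne_atTop 0] with n hn t _
  rw [moebius_intervalDilationMatrix _ hn]

/-- Let `I n = (a n, b n) ⊂ (0,∞)` be an increasing sequence of intervals with `a n → 0`
and `b n → ∞`, and fix `s : ℝ`.  The dilations of the intervals `I n`,
`δ^{I_n}_s (t) = (e^s b_n (t − a_n) + a_n (b_n − t)) / (e^s (t − a_n) + b_n − t)`,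
converge to the dilation `δ_s(t) = e^s t` uniformly on every compact subset of `(0,∞)`,
together with all their derivatives. -/
theorem stmt_15 (s : ℝ) (a b : ℕ → ℝ)
    (ha_pos : ∀ n, 0 < a n) (hab : ∀ n, a n < b n)
    (ha_anti : Antitone a) (hb_mono : Monotone b)
    (ha_lim : Tendsto a atTop (nhds 0)) (hb_lim : Tendsto b atTop atTop) :
    ∀ K : Set ℝ, K ⊆ Set.Ioi (0 : ℝ) → IsCompact K → ∀ k : ℕ,
      TendstoUniformlyOn
        (fun n => iteratedDeriv k (fun t : ℝ =>
          (Real.exp s * b n * (t - a n) + a n * (b n - t)) /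
            (Real.exp s * (t - a n) + b n - t)))
        (iteratedDeriv k (fun t : ℝ => Real.exp s * t)) atTop K :=
  stmt_15_general s a b ha_lim hb_lim
end
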